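/- arXiv:2305.11866 — 7 statements merged into one kernel-verified Lean document; each statement's English description precedes it below -/
import Mathlib

section
/- Let 𝐌 = [[𝐀, 𝐁], [𝐂, 𝐃]] be a block matrix with 𝐀 ∈ ℂ^{d1×d1}, 𝐁 ∈ ℂ^{d1×d2}, 𝐂 ∈ ℂ^{d2×d1}, 𝐃 ∈ ℂ^{d2×d2}, and suppose K = [Y; X] with Y ∈ ℂ^{d1×d1} invertible and X ∈ ℂ^{d2×d1} satisfies 𝐌 K = K Λ for some Λ ∈ ℂ^{d1×d1} (i.e., the columns of K span an 𝐌-invariant subspace), and let L = X Y⁻¹. If 𝐌 is invertible, then 𝐀 + 𝐁 L = Y Λ Y⁻¹ is invertible and L = (𝐂 + 𝐃 L)(𝐀 + 𝐁 L)⁻¹, i.e., L is a fixed point of the matrix linear fractional transformation L ↦ (𝐂 + 𝐃 L)(𝐀 + 𝐁 L)⁻¹. -/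
open Matrix

/-- if the columns of `K = [Y; X]` (with `Y` square invertible) span an
`𝐌`-invariant subspace of the invertible block matrix `𝐌 = [[𝐀,𝐁],[𝐂,𝐃]]`, i.e.
`𝐌 K = K Λ`, then `L = X Y⁻¹` satisfies `𝐀 + 𝐁 L = Y Λ Y⁻¹` invertible and
`L = (𝐂 + 𝐃 L)(𝐀 + 𝐁 L)⁻¹`. -/
theorem stmt_3 {d1 d2 : ℕ}
    (A : Matrix (Fin d1) (Fin d1) ℂ) (B : Matrix (Fin d1) (Fin d2) ℂ)
    (C : Matrix (Fin d2) (Fin d1) ℂ) (D : Matrix (Fin d2) (Fin d2) ℂ)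
    (Y : Matrix (Fin d1) (Fin d1) ℂ) (X : Matrix (Fin d2) (Fin d1) ℂ)
    (Λ : Matrix (Fin d1) (Fin d1) ℂ)
    (hM : IsUnit (Matrix.fromBlocks A B C D).det)
    (hY : IsUnit Y.det)
    (hinv : Matrix.fromBlocks A B C D * Matrix.fromRows Y X = Matrix.fromRows Y X * Λ) :
    IsUnit (A + B * (X * Y⁻¹)).det ∧
      A + B * (X * Y⁻¹) = Y * Λ * Y⁻¹ ∧
      X * Y⁻¹ = (C + D * (X * Y⁻¹)) * (A + B * (X * Y⁻¹))⁻¹ := by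
  rw [fromBlocks_mul_fromRows, fromRows_mul, fromRows_ext_iff] at hinv
  obtain ⟨h1, h2⟩ := hinv
  -- Λ is invertible
  have hK : Matrix.fromRows Y X =
      (Matrix.fromBlocks A B C D)⁻¹ * Matrix.fromRows (Y * Λ) (X * Λ) := by
    rw [← h1, ← h2, ← fromBlocks_mul_fromRows, ← Matrix.mul_assoc,
      Matrix.nonsing_inv_mul _ hM, Matrix.one_mul]
  set Mi := (Matrix.fromBlocks A B C D)⁻¹ with hMi
  have hKY : Y = (Mi.toBlocks₁₁ * Y + Mi.toBlocks₁₂ * X) * Λ := by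
    have := hK
    rw [← Matrix.fromBlocks_toBlocks Mi, fromBlocks_mul_fromRows, fromRows_ext_iff] at this
    rw [Matrix.add_mul, Matrix.mul_assoc, Matrix.mul_assoc]
    exact this.1
  have hΛ : IsUnit Λ.det := by
    have := hY
    rw [hKY, Matrix.det_mul] at this
    exact isUnit_of_mul_isUnit_right this
  -- main equalities
  have hABL : A + B * (X * Y⁻¹) = Y * Λ * Y⁻¹ := by
    have hA : A = A * Y * Y⁻¹ := by
      rw [Matrix.mul_assoc, Matrix.mul_nonsing_inv _ hY, Matrix.mul_one]
    rw [← h1]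
    rw [Matrix.add_mul]
    nth_rewrite 1 [hA]
    rw [Matrix.mul_assoc, Matrix.mul_assoc]
  have hCDL : C + D * (X * Y⁻¹) = X * Λ * Y⁻¹ := by
    have hC : C = C * Y * Y⁻¹ := by
      rw [Matrix.mul_assoc, Matrix.mul_nonsing_inv _ hY, Matrix.mul_one]
    rw [← h2, Matrix.add_mul]
    nth_rewrite 1 [hC]
    rw [Matrix.mul_assoc, Matrix.mul_assoc]
  have hdet : IsUnit (A + B * (X * Y⁻¹)).det := by
    rw [hABL, Matrix.det_mul, Matrix.det_mul, Matrix.det_nonsing_inv, Ring.inverse_eq_inv']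
    exact (hY.mul hΛ).mul hY.inv
  refine ⟨hdet, hABL, ?_⟩
  rw [hCDL, hABL, Matrix.mul_inv_rev, Matrix.mul_inv_rev,
    Matrix.nonsing_inv_nonsing_inv _ hY]
  have hy : Y⁻¹ * (Y * (Λ⁻¹ * Y⁻¹)) = Λ⁻¹ * Y⁻¹ := by
    rw [← Matrix.mul_assoc, Matrix.nonsing_inv_mul _ hY, Matrix.one_mul]
  rw [Matrix.mul_assoc (X * Λ), hy, ← Matrix.mul_assoc, Matrix.mul_assoc X,
    Matrix.mul_nonsing_inv _ hΛ, Matrix.mul_one]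
end

section
/- Suppose L1 satisfies the fixed point equation L1(𝐀1 + 𝐁1 L1) = 𝐂1 + 𝐃1 L1 of the matrix LFT L ↦ (𝐂1 + 𝐃1 L)(𝐀1 + 𝐁1 L)⁻¹, with 𝐇1 := 𝐀1 + 𝐁1 L1 invertible. Then the linearized perturbation dynamics of the LFT at L1 are given by the linear operator 𝛀1(Δ) = (𝐃1 − L1 𝐁1) Δ 𝐇1⁻¹; in particular its spectrum is {λ/μ : λ ∈ spec(𝐃1 − L1 𝐁1), μ ∈ spec(𝐀1 + 𝐁1 L1)}. -/
/-!
The LFT is `L ↦ N(L) H(L)⁻¹` with `N`, `H` affine, so the product rule and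
`d(H⁻¹) = -H⁻¹ (dH) H⁻¹` give the derivative `Δ ↦ (D - N(L₀) H(L₀)⁻¹ B) Δ H(L₀)⁻¹`, and at a fixed
point `N(L₀) H(L₀)⁻¹ = L₀`.

For the spectrum, `P X H⁻¹ = z X` iff `P X = X (z H)`, and such a Sylvester equation `P X = X M`
has a nonzero solution iff `P` and `M` share an eigenvalue. Indeed `X χ_P(M) = χ_P(P) X = 0`, so
`χ_P(M)` is singular and, by spectral mapping, some eigenvalue of `M` is a root of `χ_P`;
conversely a right eigenvector `u` of `P` and a left eigenvector `w` of `M` for a common eigenvalue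
give the solution `u wᵀ`. As `σ (z H) = z σ H` and `0 ∉ σ H`, the eigenvalues are the `λ / μ`.
-/

open Matrix

attribute [local instance] Matrix.normedAddCommGroup Matrix.normedSpace

/-- The linear operator `Δ ↦ (𝐃 - L1 𝐁) Δ (𝐀 + 𝐁 L1)⁻¹` (the linearized perturbation
dynamics of the matrix LFT at the fixed point `L1`). -/
noncomputable def perturbOp {d1 d2 : ℕ}
    (A : Matrix (Fin d1) (Fin d1) ℂ) (B : Matrix (Fin d1) (Fin d2) ℂ)
    (D : Matrix (Fin d2) (Fin d2) ℂ) (L1 : Matrix (Fin d2) (Fin d1) ℂ) :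
    Module.End ℂ (Matrix (Fin d2) (Fin d1) ℂ) where
  toFun Δ := (D - L1 * B) * Δ * (A + B * L1)⁻¹
  map_add' X Y := by simp [Matrix.mul_add, Matrix.add_mul]
  map_smul' c X := by simp [Matrix.mul_smul, Matrix.smul_mul]

open scoped Pointwise

namespace Matrix

variable {m n : Type*} [Fintype m] [Fintype n]

def mulLeftRight {R : Type*} [CommRing R] (P : Matrix m m R) (Q : Matrix n n R) :
    Module.End R (Matrix m n R) where
  toFun X := P * X * Q
  map_add' X Y := by simp only [Matrix.mul_add, Matrix.add_mul]
  map_smul' c X := by simp only [Matrix.mul_smul, Matrix.smul_mul, RingHom.id_apply]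

@[simp]
lemma mulLeftRight_apply {R : Type*} [CommRing R] (P : Matrix m m R) (Q : Matrix n n R)
    (X : Matrix m n R) : mulLeftRight P Q X = P * X * Q := rfl

section Spectrum

variable {K : Type*} [Field K]

lemma mem_spectrum_mulLeftRight_iff {P : Matrix m m K} {Q : Matrix n n K} {z : K} :
    z ∈ spectrum K (mulLeftRight P Q) ↔ ∃ X : Matrix m n K, X ≠ 0 ∧ P * X * Q = z • X := by
  rw [← Module.End.hasEigenvalue_iff_mem_spectrum, Module.End.hasEigenvalue_iff,
    Submodule.ne_bot_iff]
  simp only [Module.End.mem_eigenspace_iff, mulLeftRight_apply]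
  exact exists_congr fun X => and_comm

variable [DecidableEq m] [DecidableEq n]

lemma mem_spectrum_iff_det_eq_zero {N : Matrix n n K} {μ : K} :
    μ ∈ spectrum K N ↔ (scalar n μ - N).det = 0 := by
  rw [mem_spectrum_iff_isRoot_charpoly, Polynomial.IsRoot.def, eval_charpoly]

lemma aeval_mul_eq_mul_aeval {P : Matrix m m K} {M : Matrix n n K} {X : Matrix m n K}
    (h : P * X = X * M) (p : Polynomial K) :
    Polynomial.aeval P p * X = X * Polynomial.aeval M p := by
  have hpow (k : ℕ) : P ^ k * X = X * M ^ k := by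
    induction k with
    | zero => simp
    | succ k ih => rw [pow_succ', Matrix.mul_assoc, ih, ← Matrix.mul_assoc, h, Matrix.mul_assoc,
        ← pow_succ']
  simp only [Polynomial.aeval_eq_sum_range, Matrix.sum_mul, Matrix.mul_sum, Matrix.smul_mul,
    Matrix.mul_smul, hpow]

lemma exists_mem_spectrum_of_mul_eq_mul [IsAlgClosed K] {P : Matrix m m K} {M : Matrix n n K}
    {X : Matrix m n K} (hX : X ≠ 0) (h : P * X = X * M) :
    ∃ μ, μ ∈ spectrum K P ∧ μ ∈ spectrum K M := by
  have : Nonempty n := not_isEmpty_iff.mp fun _ => hX (Subsingleton.elim _ _)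
  have hsingular : ¬IsUnit (Polynomial.aeval M P.charpoly) := by
    intro hu
    have hX0 := aeval_mul_eq_mul_aeval h P.charpoly
    rw [aeval_self_charpoly, Matrix.zero_mul] at hX0
    apply hX
    rw [← Matrix.mul_nonsing_inv_cancel_right _ X ((isUnit_iff_isUnit_det _).mp hu), ← hX0,
      Matrix.zero_mul]
  have h0 := (spectrum.zero_mem_iff K).mpr hsingular
  rw [spectrum.map_polynomial_aeval_of_nonempty M _
    (spectrum.nonempty_of_isAlgClosed_of_finiteDimensional K M)] at h0
  obtain ⟨μ, hμM, hμ⟩ := h0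
  exact ⟨μ, mem_spectrum_iff_isRoot_charpoly.mpr hμ, hμM⟩

lemma exists_mul_eq_mul_of_mem_spectrum {P : Matrix m m K} {M : Matrix n n K} {μ : K}
    (hP : μ ∈ spectrum K P) (hM : μ ∈ spectrum K M) :
    ∃ X : Matrix m n K, X ≠ 0 ∧ P * X = X * M := by
  obtain ⟨u, hu, hPu⟩ := exists_mulVec_eq_zero_iff.mpr (mem_spectrum_iff_det_eq_zero.mp hP)
  obtain ⟨w, hw, hMw⟩ := exists_vecMul_eq_zero_iff.mpr (mem_spectrum_iff_det_eq_zero.mp hM)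
  have hX : vecMulVec u w ≠ 0 := by
    obtain ⟨i, hi⟩ := Function.ne_iff.mp hu
    obtain ⟨j, hj⟩ := Function.ne_iff.mp hw
    exact fun h => mul_ne_zero hi hj (congrFun₂ h i j)
  refine ⟨vecMulVec u w, hX, ?_⟩
  have hleft : (scalar m μ - P) * vecMulVec u w = 0 := by
    rw [mul_vecMulVec, hPu, zero_vecMulVec]
  have hright : vecMulVec u w * (scalar n μ - M) = 0 := by
    rw [vecMulVec_mul, hMw]
    ext
    simp [vecMulVec_apply]
  rw [Matrix.sub_mul, sub_eq_zero, scalar_apply, ← smul_one_eq_diagonal, Matrix.smul_mul,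
    Matrix.one_mul] at hleft
  rw [Matrix.mul_sub, sub_eq_zero, scalar_apply, ← smul_one_eq_diagonal, Matrix.mul_smul,
    Matrix.mul_one] at hright
  rw [← hleft, hright]

theorem exists_mul_eq_mul_iff [IsAlgClosed K] {P : Matrix m m K} {M : Matrix n n K} :
    (∃ X : Matrix m n K, X ≠ 0 ∧ P * X = X * M) ↔ ∃ μ, μ ∈ spectrum K P ∧ μ ∈ spectrum K M :=
  ⟨fun ⟨_, hX, h⟩ => exists_mem_spectrum_of_mul_eq_mul hX h,
    fun ⟨_, hP, hM⟩ => exists_mul_eq_mul_of_mem_spectrum hP hM⟩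

lemma spectrum_smul [IsAlgClosed K] (z : K) (H : Matrix n n K) :
    spectrum K (z • H) = z • spectrum K H := by
  cases isEmpty_or_nonempty n
  · simp [spectrum.of_subsingleton]
  · exact spectrum.smul_eq_smul z H (spectrum.nonempty_of_isAlgClosed_of_finiteDimensional K H)

theorem spectrum_mulLeftRight_inv [IsAlgClosed K] (P : Matrix m m K) {H : Matrix n n K}
    (hH : IsUnit H) :
    spectrum K (mulLeftRight P H⁻¹) =
      {z | ∃ l ∈ spectrum K P, ∃ μ ∈ spectrum K H, z = l / μ} := by
  have hdet := (isUnit_iff_isUnit_det H).mp hH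
  ext z
  have hcleared : (∃ X : Matrix m n K, X ≠ 0 ∧ P * X * H⁻¹ = z • X) ↔
      ∃ X : Matrix m n K, X ≠ 0 ∧ P * X = X * (z • H) :=
    exists_congr fun X => and_congr_right fun _ => by
      rw [Matrix.mul_smul, ← Matrix.smul_mul]
      constructor
      · intro h
        rw [← h, Matrix.nonsing_inv_mul_cancel_right _ _ hdet]
      · intro h
        rw [h, Matrix.mul_nonsing_inv_cancel_right _ _ hdet]
  rw [mem_spectrum_mulLeftRight_iff, hcleared, exists_mul_eq_mul_iff, spectrum_smul]
  simp only [Set.mem_smul_set, smul_eq_mul, Set.mem_ofPred_eq]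
  refine exists_congr fun l => and_congr_right fun _ =>
    exists_congr fun μ => and_congr_right fun hμ => ?_
  have hμ0 : μ ≠ 0 := fun h => (spectrum.zero_notMem_iff K).mpr hH (h ▸ hμ)
  rw [eq_div_iff hμ0]

end Spectrum

section Calculus

variable {𝕜 : Type*} [NontriviallyNormedField 𝕜] [CompleteSpace 𝕜] [DecidableEq n]

theorem hasFDerivAt_inv {H : Matrix n n 𝕜} (hH : IsUnit H) :
    HasFDerivAt (fun M : Matrix n n 𝕜 => M⁻¹)
      (-LinearMap.toContinuousLinearMap (mulLeftRight H⁻¹ H⁻¹)) H := by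
  -- The entrywise sup norm is not submultiplicative; the `L∞` operator norm is, and it induces
  -- the same topology definitionally, which is all that `HasFDerivAt` depends on.
  let R : NormedRing (Matrix n n 𝕜) := Matrix.linftyOpNormedRing
  let _ : NormedAlgebra 𝕜 (Matrix n n 𝕜) := Matrix.linftyOpNormedAlgebra
  have : @CompleteSpace _ R.toUniformSpace := FiniteDimensional.complete 𝕜 _
  have h := hasFDerivAt_ringInverse (𝕜 := 𝕜) hH.unit
  rw [IsUnit.unit_spec, ← funext nonsing_inv_eq_ringInverse] at h
  refine h.congr_fderiv ?_
  ext X : 1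
  simp only [coe_units_inv, IsUnit.unit_spec, _root_.neg_apply,
    ContinuousLinearMap.mulLeftRight_apply]
  rfl

theorem hasFDerivAt_linearFractional {A : Matrix n n 𝕜} {B : Matrix n m 𝕜} {C : Matrix m n 𝕜}
    {D : Matrix m m 𝕜} {L₀ : Matrix m n 𝕜} (hH : IsUnit (A + B * L₀)) :
    HasFDerivAt (fun L => (C + D * L) * (A + B * L)⁻¹)
      (LinearMap.toContinuousLinearMap
        (mulLeftRight (D - (C + D * L₀) * (A + B * L₀)⁻¹ * B) (A + B * L₀)⁻¹)) L₀ := by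
  have hden : HasFDerivAt (fun L => A + B * L)
      (LinearMap.toContinuousLinearMap (mulLeftLinearMap n 𝕜 B)) L₀ :=
    (LinearMap.toContinuousLinearMap (mulLeftLinearMap n 𝕜 B)).hasFDerivAt.const_add A
  have hnum : HasFDerivAt (fun L => C + D * L)
      (LinearMap.toContinuousLinearMap (mulLeftLinearMap n 𝕜 D)) L₀ :=
    (LinearMap.toContinuousLinearMap (mulLeftLinearMap n 𝕜 D)).hasFDerivAt.const_add C
  refine ((mulLinearMap 𝕜).toContinuousBilinearMap.hasFDerivAt_of_bilinear hnum
    ((Matrix.hasFDerivAt_inv hH).comp L₀ hden)).congr_fderiv ?_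
  ext Δ : 1
  set H := A + B * L₀
  change (C + D * L₀) * -(H⁻¹ * (B * Δ) * H⁻¹) + D * Δ * H⁻¹ =
    (D - (C + D * L₀) * H⁻¹ * B) * Δ * H⁻¹
  simp only [Matrix.mul_neg, Matrix.sub_mul, Matrix.mul_assoc]
  abel

end Calculus

end Matrix

/-- at a fixed point `L1` of the matrix LFT `L ↦ (𝐂 + 𝐃 L)(𝐀 + 𝐁 L)⁻¹` with
`𝐇1 = 𝐀 + 𝐁 L1` invertible, the linearization (Fréchet derivative) of the LFT at `L1` is
`Δ ↦ (𝐃 - L1 𝐁) Δ 𝐇1⁻¹`, and its spectrum is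
`{λ/μ : λ ∈ spec(𝐃 - L1 𝐁), μ ∈ spec(𝐀 + 𝐁 L1)}`. -/
theorem stmt_6 {d1 d2 : ℕ}
    (A : Matrix (Fin d1) (Fin d1) ℂ) (B : Matrix (Fin d1) (Fin d2) ℂ)
    (C : Matrix (Fin d2) (Fin d1) ℂ) (D : Matrix (Fin d2) (Fin d2) ℂ)
    (L1 : Matrix (Fin d2) (Fin d1) ℂ)
    (hfix : L1 * (A + B * L1) = C + D * L1)
    (hH : IsUnit (A + B * L1).det) :
    HasFDerivAt (fun L : Matrix (Fin d2) (Fin d1) ℂ => (C + D * L) * (A + B * L)⁻¹)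
      (LinearMap.toContinuousLinearMap (perturbOp A B D L1)) L1 ∧
    spectrum ℂ (perturbOp A B D L1) =
      {z : ℂ | ∃ l ∈ spectrum ℂ (D - L1 * B), ∃ m ∈ spectrum ℂ (A + B * L1), z = l / m} := by
  have hunit : IsUnit (A + B * L1) := (isUnit_iff_isUnit_det _).mpr hH
  have hLFT : (C + D * L1) * (A + B * L1)⁻¹ = L1 := by
    rw [← hfix, Matrix.mul_nonsing_inv_cancel_right _ _ hH]
  have hperturb : perturbOp A B D L1 = mulLeftRight (D - L1 * B) (A + B * L1)⁻¹ := rfl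
  rw [hperturb]
  refine ⟨?_, spectrum_mulLeftRight_inv _ hunit⟩
  simpa only [hLFT] using hasFDerivAt_linearFractional (C := C) (D := D) hunit
end

section
/- Suppose L1 satisfies the fixed point equation A2ᵀ L1 + B2ᵀ = (B1 + D1 L1)(A1 + B1ᵀ L1)⁻¹ (D2ᵀ + B2 L1), with A1 + B1ᵀ L1 invertible. Let M1 = [[A1, B1ᵀ],[B1, D1]] and M2ᵀ-block form [[D2ᵀ, B2],[B2ᵀ, A2ᵀ]]. If K1 = [I; L1] and 𝐇1 := (D2ᵀ + B2 L1)⁻¹(A1 + B1ᵀ L1) exists, then M1 K1 = [[D2ᵀ, B2],[B2ᵀ, A2ᵀ]] K1 𝐇1, i.e., [I; L1] spans a generalized eigenspace of the pencil (M1, M2ᵀ). -/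
open Matrix

/-- if `L1` satisfies
`A2ᵀ L1 + B2ᵀ = (B1 + D1 L1)(A1 + B1ᵀ L1)⁻¹ (D2ᵀ + B2 L1)` with `A1 + B1ᵀ L1` and
`D2ᵀ + B2 L1` invertible, then with `𝐇1 = (D2ᵀ + B2 L1)⁻¹(A1 + B1ᵀ L1)`,
`M1 [I; L1] = [[D2ᵀ, B2],[B2ᵀ, A2ᵀ]] [I; L1] 𝐇1`, i.e. `[I; L1]` spans a generalized
eigenspace of the pencil `(M1, M2ᵀ)`. -/
theorem stmt_10 {d1 d2 : ℕ}
    (A1 : Matrix (Fin d1) (Fin d1) ℝ) (B1 : Matrix (Fin d2) (Fin d1) ℝ)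
    (D1 : Matrix (Fin d2) (Fin d2) ℝ)
    (A2 : Matrix (Fin d2) (Fin d2) ℝ) (B2 : Matrix (Fin d1) (Fin d2) ℝ)
    (D2 : Matrix (Fin d1) (Fin d1) ℝ)
    (L1 : Matrix (Fin d2) (Fin d1) ℝ)
    (hfix : A2ᵀ * L1 + B2ᵀ = (B1 + D1 * L1) * (A1 + B1ᵀ * L1)⁻¹ * (D2ᵀ + B2 * L1))
    (hinv1 : IsUnit (A1 + B1ᵀ * L1).det)
    (hinv2 : IsUnit (D2ᵀ + B2 * L1).det) :
    Matrix.fromBlocks A1 B1ᵀ B1 D1 * Matrix.fromRows (1 : Matrix (Fin d1) (Fin d1) ℝ) L1 =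
      Matrix.fromBlocks D2ᵀ B2 B2ᵀ A2ᵀ * Matrix.fromRows (1 : Matrix (Fin d1) (Fin d1) ℝ) L1 *
        ((D2ᵀ + B2 * L1)⁻¹ * (A1 + B1ᵀ * L1)) := by
  rw [fromBlocks_mul_fromRows, fromBlocks_mul_fromRows, fromRows_mul, Matrix.mul_one, Matrix.mul_one, Matrix.mul_one, Matrix.mul_one]
  have h1 : (D2ᵀ + B2 * L1) * ((D2ᵀ + B2 * L1)⁻¹ * (A1 + B1ᵀ * L1)) = A1 + B1ᵀ * L1 := by
    rw [← Matrix.mul_assoc, mul_nonsing_inv _ hinv2, one_mul]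
  have h2 : (B2ᵀ + A2ᵀ * L1) * ((D2ᵀ + B2 * L1)⁻¹ * (A1 + B1ᵀ * L1)) = B1 + D1 * L1 := by
    rw [← Matrix.mul_assoc, add_comm B2ᵀ, hfix, Matrix.mul_assoc, Matrix.mul_assoc, Matrix.mul_assoc,
      ← Matrix.mul_assoc (D2ᵀ + B2 * L1), mul_nonsing_inv _ hinv2, one_mul,
      nonsing_inv_mul _ hinv1, Matrix.mul_one]
  rw [h1, h2]
end

section
/- Conversely, let K1 = [Y1; X1] with Y1 ∈ ℂ^{d1×d1} invertible solve the generalized eigenvalue problem M1 K1 = M2ᵀ K1 Λ, where M1 = [[A1, B1ᵀ],[B1, D1]] and M2ᵀ = [[D2ᵀ, B2],[B2ᵀ, A2ᵀ]]. Set L1 = X1 Y1⁻¹ and 𝐇1 = Y1 Λ Y1⁻¹, and assume 𝐇1 and A1 + B1ᵀ L1 are invertible. Then (A1 + B1ᵀ L1)⁻¹(D2ᵀ + B2 L1) = 𝐇1⁻¹ and A2ᵀ L1 + B2ᵀ = (B1 + D1 L1)(A1 + B1ᵀ L1)⁻¹(D2ᵀ + B2 L1). -/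
open Matrix

/-- if `K1 = [Y1; X1]` (with `Y1` invertible) solves the generalized
eigenvalue problem `M1 K1 = M2ᵀ K1 Λ` with `M1 = [[A1, B1ᵀ],[B1, D1]]` and
`M2ᵀ = [[D2ᵀ, B2],[B2ᵀ, A2ᵀ]]`, and `L1 = X1 Y1⁻¹`, `𝐇1 = Y1 Λ Y1⁻¹` with `𝐇1` and
`A1 + B1ᵀ L1` invertible, then `(A1 + B1ᵀ L1)⁻¹(D2ᵀ + B2 L1) = 𝐇1⁻¹` and
`A2ᵀ L1 + B2ᵀ = (B1 + D1 L1)(A1 + B1ᵀ L1)⁻¹(D2ᵀ + B2 L1)`. -/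
theorem stmt_11 {d1 d2 : ℕ}
    (A1 : Matrix (Fin d1) (Fin d1) ℂ) (B1 : Matrix (Fin d2) (Fin d1) ℂ)
    (D1 : Matrix (Fin d2) (Fin d2) ℂ)
    (A2 : Matrix (Fin d2) (Fin d2) ℂ) (B2 : Matrix (Fin d1) (Fin d2) ℂ)
    (D2 : Matrix (Fin d1) (Fin d1) ℂ)
    (Y1 Λ : Matrix (Fin d1) (Fin d1) ℂ) (X1 : Matrix (Fin d2) (Fin d1) ℂ)
    (hY : IsUnit Y1.det)
    (hgev : Matrix.fromBlocks A1 B1ᵀ B1 D1 * Matrix.fromRows Y1 X1 =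
      Matrix.fromBlocks D2ᵀ B2 B2ᵀ A2ᵀ * Matrix.fromRows Y1 X1 * Λ)
    (L1 : Matrix (Fin d2) (Fin d1) ℂ) (hL1 : L1 = X1 * Y1⁻¹)
    (H1 : Matrix (Fin d1) (Fin d1) ℂ) (hH1 : H1 = Y1 * Λ * Y1⁻¹)
    (hH1inv : IsUnit H1.det)
    (hAinv : IsUnit (A1 + B1ᵀ * L1).det) :
    (A1 + B1ᵀ * L1)⁻¹ * (D2ᵀ + B2 * L1) = H1⁻¹ ∧
    A2ᵀ * L1 + B2ᵀ = (B1 + D1 * L1) * (A1 + B1ᵀ * L1)⁻¹ * (D2ᵀ + B2 * L1) := by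
  rw [fromBlocks_mul_fromRows, fromBlocks_mul_fromRows, fromRows_mul,
    fromRows_ext_iff] at hgev
  obtain ⟨h1, h2⟩ := hgev
  have hYinv : Y1 * Y1⁻¹ = 1 := mul_nonsing_inv _ hY
  -- first key identity: A1 + B1ᵀ L1 = (D2ᵀ + B2 L1) * H1
  have k1 : A1 + B1ᵀ * L1 = (D2ᵀ + B2 * L1) * H1 := by
    have := congrArg (· * Y1⁻¹) h1
    simp only [Matrix.mul_assoc] at this
    rw [hL1, hH1]
    calc A1 + B1ᵀ * (X1 * Y1⁻¹)
        = (A1 * Y1 + B1ᵀ * X1) * Y1⁻¹ := by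
          rw [Matrix.add_mul, Matrix.mul_assoc, Matrix.mul_assoc, hYinv, Matrix.mul_one]
      _ = (D2ᵀ * Y1 + B2 * X1) * (Λ * Y1⁻¹) := by
          rw [h1]; rw [Matrix.mul_assoc]
      _ = (D2ᵀ + B2 * (X1 * Y1⁻¹)) * (Y1 * Λ * Y1⁻¹) := by
          rw [Matrix.add_mul, Matrix.add_mul]
          congr 1
          · simp only [Matrix.mul_assoc]
          · simp only [Matrix.mul_assoc]
            rw [← Matrix.mul_assoc Y1⁻¹ Y1, nonsing_inv_mul _ hY, Matrix.one_mul]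
  have k2 : B1 + D1 * L1 = (B2ᵀ + A2ᵀ * L1) * H1 := by
    rw [hL1, hH1]
    calc B1 + D1 * (X1 * Y1⁻¹)
        = (B1 * Y1 + D1 * X1) * Y1⁻¹ := by
          rw [Matrix.add_mul, Matrix.mul_assoc, Matrix.mul_assoc, hYinv, Matrix.mul_one]
      _ = (B2ᵀ * Y1 + A2ᵀ * X1) * (Λ * Y1⁻¹) := by
          rw [h2]; rw [Matrix.mul_assoc]
      _ = (B2ᵀ + A2ᵀ * (X1 * Y1⁻¹)) * (Y1 * Λ * Y1⁻¹) := by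
          rw [Matrix.add_mul, Matrix.add_mul]
          congr 1
          · simp only [Matrix.mul_assoc]
          · simp only [Matrix.mul_assoc]
            rw [← Matrix.mul_assoc Y1⁻¹ Y1, nonsing_inv_mul _ hY, Matrix.one_mul]
  have hDinv : IsUnit (D2ᵀ + B2 * L1).det := by
    have := hAinv
    rw [k1, Matrix.det_mul] at this
    exact isUnit_of_mul_isUnit_left this
  have first : (A1 + B1ᵀ * L1)⁻¹ * (D2ᵀ + B2 * L1) = H1⁻¹ := by
    rw [k1, Matrix.mul_inv_rev, Matrix.mul_assoc, nonsing_inv_mul _ hDinv, Matrix.mul_one]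
  refine ⟨first, ?_⟩
  rw [Matrix.mul_assoc, first, k2, Matrix.mul_assoc, mul_nonsing_inv _ hH1inv,
    Matrix.mul_one, add_comm]
end

section
/- Let 𝐌1 = M2⁻ᵀ M1 with M1, M2 invertible, and suppose L1 arises from an 𝐌1-invariant subspace as in the invariant subspace construction (so 𝐇1 = 𝐀1 + 𝐁1 L1 is invertible) and L2 is defined via L2ᵀ = −(B1 + D1 L1)(A1 + B1ᵀ L1)⁻¹. Then the matrix 𝐇2' := 𝐃2 − L2 𝐁2 (the block from the triangularization of 𝐌2 = M1⁻ᵀ M2) satisfies 𝐇2' = (A1 + B1ᵀ L1)⁻ᵀ 𝐇1⁻ᵀ (A1 + B1ᵀ L1)ᵀ; in particular 𝐇2' is similar to 𝐇1⁻ᵀ and spec(𝐇2') = {1/λ : λ ∈ spec(𝐇1)}. -/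
/-!
The invariance `𝐌1 [I; L1] = [I; L1] 𝐇1` reads `M1 [I; L1] = M2ᵀ [I; L1] 𝐇1`; transposing it shows
that the row space of `[I; L1]ᵀ M1ᵀ = [Eᵀ, (B1 + D1 L1)ᵀ]`, with `E = A1 + B1ᵀ L1`, is left invariant
under `𝐌2 = M1⁻ᵀ M2`, which acts on it by `𝐇1⁻ᵀ`. Since `L2 = -E⁻ᵀ (B1 + D1 L1)ᵀ`, reading off the
first block column of this left invariance gives `𝐃2 - L2 𝐁2 = E⁻ᵀ 𝐇1⁻ᵀ Eᵀ`. The spectrum is then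
that of `𝐇1⁻ᵀ`, i.e. the reciprocals of the eigenvalues of `𝐇1`.
-/

open Matrix

namespace Matrix

variable {m n ι : Type*} [Fintype m] [DecidableEq m] [Fintype n] [DecidableEq n]
  [Fintype ι] [DecidableEq ι]

section CommRing

variable {R : Type*} [CommRing R]

theorem spectrum_transpose (A : Matrix n n R) : spectrum R Aᵀ = spectrum R A := by
  ext r
  simp only [mem_spectrum_iff_not_isUnit_eval_charpoly, charpoly_transpose]

theorem spectrum_nonsing_inv_mul_mul {A P : Matrix n n R} (hP : IsUnit P.det) :
    spectrum R (P⁻¹ * A * P) = spectrum R A := by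
  have hPu := (isUnit_iff_isUnit_det P).mpr hP
  rw [← hPu.unit_spec, ← coe_units_inv, spectrum.units_conjugate']

omit [DecidableEq n] in
theorem toBlocks₁₁_add_mul_toBlocks₂₁_of_fromCols_mul_eq {P K : Matrix m m R}
    {Q : Matrix m n R} {N : Matrix (m ⊕ n) (m ⊕ n) R} (hP : IsUnit P.det)
    (h : fromCols P Q * N = K * fromCols P Q) :
    N.toBlocks₁₁ + P⁻¹ * Q * N.toBlocks₂₁ = P⁻¹ * K * P := by
  rw [← fromBlocks_toBlocks N, fromCols_mul_fromBlocks, mul_fromCols, fromCols_ext_iff] at h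
  rw [Matrix.mul_assoc, Matrix.mul_assoc, ← h.1, Matrix.mul_add,
    nonsing_inv_mul_cancel_left _ _ hP]

theorem transpose_mul_inv_transpose_mul_eq {M1 M2 : Matrix ι ι R} {u : Matrix ι m R}
    {H : Matrix m m R} (hM1 : IsUnit M1.det) (hM2 : IsUnit M2.det) (hH : IsUnit H.det)
    (h : (M2ᵀ)⁻¹ * M1 * u = u * H) :
    (M1 * u)ᵀ * ((M1ᵀ)⁻¹ * M2) = (Hᵀ)⁻¹ * (M1 * u)ᵀ := by
  have hM2t : IsUnit M2ᵀ.det := by rwa [det_transpose]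
  have hM1t : IsUnit M1ᵀ.det := by rwa [det_transpose]
  have hHt : IsUnit Hᵀ.det := by rwa [det_transpose]
  have hM1u : M1 * u = M2ᵀ * (u * H) := by
    rw [← h, Matrix.mul_assoc, mul_nonsing_inv_cancel_left _ _ hM2t]
  have hM1uT : (M1 * u)ᵀ = Hᵀ * (uᵀ * M2) := by
    rw [hM1u, transpose_mul, transpose_mul, transpose_transpose, Matrix.mul_assoc]
  rw [transpose_mul, Matrix.mul_assoc, mul_nonsing_inv_cancel_left _ _ hM1t, ← transpose_mul,
    hM1uT, nonsing_inv_mul_cancel_left _ _ hHt]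

end CommRing

theorem spectrum_nonsing_inv {K : Type*} [Field K] {A : Matrix n n K} (hA : IsUnit A.det) :
    spectrum K A⁻¹ = (spectrum K A)⁻¹ := by
  have hAu := (isUnit_iff_isUnit_det A).mpr hA
  rw [← hAu.unit_spec, ← coe_units_inv, spectrum.map_inv]

end Matrix

theorem stmt_15_general {d1 d2 : ℕ}
    (A1 : Matrix (Fin d1) (Fin d1) ℝ) (B1 : Matrix (Fin d2) (Fin d1) ℝ)
    (D1 : Matrix (Fin d2) (Fin d2) ℝ)
    (L1 : Matrix (Fin d2) (Fin d1) ℝ) (L2 : Matrix (Fin d1) (Fin d2) ℝ)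
    (M1 M2 bM1 bM2 : Matrix (Fin d1 ⊕ Fin d2) (Fin d1 ⊕ Fin d2) ℝ)
    (hM1 : M1 = Matrix.fromBlocks A1 B1ᵀ B1 D1)
    (hM1inv : IsUnit M1.det) (hM2inv : IsUnit M2.det)
    (hbM1 : bM1 = (M2ᵀ)⁻¹ * M1) (hbM2 : bM2 = (M1ᵀ)⁻¹ * M2)
    (H1 : Matrix (Fin d1) (Fin d1) ℝ)
    (hinvsub : bM1 * Matrix.fromRows (1 : Matrix (Fin d1) (Fin d1) ℝ) L1 =
      Matrix.fromRows (1 : Matrix (Fin d1) (Fin d1) ℝ) L1 * H1)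
    (hH1inv : IsUnit H1.det)
    (hAinv : IsUnit (A1 + B1ᵀ * L1).det)
    (hL2 : L2ᵀ = -((B1 + D1 * L1) * (A1 + B1ᵀ * L1)⁻¹)) :
    bM2.toBlocks₁₁ - L2 * bM2.toBlocks₂₁ =
      ((A1 + B1ᵀ * L1)⁻¹)ᵀ * (H1⁻¹)ᵀ * (A1 + B1ᵀ * L1)ᵀ ∧
    spectrum ℝ (bM2.toBlocks₁₁ - L2 * bM2.toBlocks₂₁) =
      {z : ℝ | ∃ l ∈ spectrum ℝ H1, z = l⁻¹} := by
  set E := A1 + B1ᵀ * L1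
  set F := B1 + D1 * L1
  have hEt : IsUnit Eᵀ.det := by rwa [det_transpose]
  have hL2' : L2 = -((Eᵀ)⁻¹ * Fᵀ) := by
    simpa only [transpose_transpose, transpose_neg, transpose_mul, transpose_nonsing_inv]
      using congrArg transpose hL2
  have hM1u : M1 * fromRows (1 : Matrix (Fin d1) (Fin d1) ℝ) L1 = fromRows E F := by
    rw [hM1, fromBlocks_mul_fromRows]
    simp [E, F]
  have hdual := transpose_mul_inv_transpose_mul_eq hM1inv hM2inv hH1inv (hbM1 ▸ hinvsub)
  rw [hM1u, transpose_fromRows, ← hbM2] at hdual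
  have hconj : bM2.toBlocks₁₁ - L2 * bM2.toBlocks₂₁ = (Eᵀ)⁻¹ * (H1ᵀ)⁻¹ * Eᵀ := by
    rw [hL2', Matrix.neg_mul, sub_neg_eq_add]
    exact toBlocks₁₁_add_mul_toBlocks₂₁_of_fromCols_mul_eq hEt hdual
  refine ⟨by rw [hconj, transpose_nonsing_inv, transpose_nonsing_inv], ?_⟩
  rw [hconj, spectrum_nonsing_inv_mul_mul hEt, ← transpose_nonsing_inv, spectrum_transpose,
    spectrum_nonsing_inv hH1inv, ← Set.image_inv_eq_inv]
  ext z
  simp only [Set.mem_image, Set.mem_ofPred_eq, eq_comm]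

/-- with `M1 = [[A1, B1ᵀ],[B1, D1]]`, `M2 = [[D2, B2],[B2ᵀ, A2]]` invertible,
`bM1 = M2⁻ᵀ M1` and `bM2 = M1⁻ᵀ M2`, suppose `L1` arises from an `bM1`-invariant subspace,
i.e. `bM1 [I; L1] = [I; L1] 𝐇1` where `𝐇1 = 𝐀1 + 𝐁1 L1` is invertible, and
`L2ᵀ = -(B1 + D1 L1)(A1 + B1ᵀ L1)⁻¹` with `A1 + B1ᵀ L1` invertible. Then
`𝐇2' = 𝐃2 - L2 𝐁2` satisfies `𝐇2' = (A1 + B1ᵀ L1)⁻ᵀ 𝐇1⁻ᵀ (A1 + B1ᵀ L1)ᵀ` — so `𝐇2'` is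
similar to `𝐇1⁻ᵀ` — and `spec(𝐇2') = {1/λ : λ ∈ spec(𝐇1)}`. -/
theorem stmt_15 {d1 d2 : ℕ}
    (A1 : Matrix (Fin d1) (Fin d1) ℝ) (B1 : Matrix (Fin d2) (Fin d1) ℝ)
    (D1 : Matrix (Fin d2) (Fin d2) ℝ)
    (A2 : Matrix (Fin d2) (Fin d2) ℝ) (B2 : Matrix (Fin d1) (Fin d2) ℝ)
    (D2 : Matrix (Fin d1) (Fin d1) ℝ)
    (L1 : Matrix (Fin d2) (Fin d1) ℝ) (L2 : Matrix (Fin d1) (Fin d2) ℝ)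
    (M1 M2 bM1 bM2 : Matrix (Fin d1 ⊕ Fin d2) (Fin d1 ⊕ Fin d2) ℝ)
    (hM1 : M1 = Matrix.fromBlocks A1 B1ᵀ B1 D1)
    (hM2 : M2 = Matrix.fromBlocks D2 B2 B2ᵀ A2)
    (hM1inv : IsUnit M1.det) (hM2inv : IsUnit M2.det)
    (hbM1 : bM1 = (M2ᵀ)⁻¹ * M1) (hbM2 : bM2 = (M1ᵀ)⁻¹ * M2)
    (H1 : Matrix (Fin d1) (Fin d1) ℝ)
    (hH1 : H1 = bM1.toBlocks₁₁ + bM1.toBlocks₁₂ * L1)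
    (hinvsub : bM1 * Matrix.fromRows (1 : Matrix (Fin d1) (Fin d1) ℝ) L1 =
      Matrix.fromRows (1 : Matrix (Fin d1) (Fin d1) ℝ) L1 * H1)
    (hH1inv : IsUnit H1.det)
    (hAinv : IsUnit (A1 + B1ᵀ * L1).det)
    (hL2 : L2ᵀ = -((B1 + D1 * L1) * (A1 + B1ᵀ * L1)⁻¹)) :
    bM2.toBlocks₁₁ - L2 * bM2.toBlocks₂₁ =
      ((A1 + B1ᵀ * L1)⁻¹)ᵀ * (H1⁻¹)ᵀ * (A1 + B1ᵀ * L1)ᵀ ∧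
    spectrum ℝ (bM2.toBlocks₁₁ - L2 * bM2.toBlocks₂₁) =
      {z : ℝ | ∃ l ∈ spectrum ℝ H1, z = l⁻¹} :=
  stmt_15_general A1 B1 D1 L1 L2 M1 M2 bM1 bM2 hM1 hM1inv hM2inv hbM1 hbM2 H1 hinvsub hH1inv hAinv
    hL2
end

section
/- In a two-player quadratic game with costs f_i(x_i, x_{-i}) = (1/2)[x_i; x_{-i}]ᵀ[[A_i, B_iᵀ],[B_i, D_i]][x_i; x_{-i}] + [a_i; b_i]ᵀ[x_i; x_{-i}] where A_i, D_i symmetric, suppose the affine conjectures c_{-i}(x_i) = L_i x_i + ℓ_i satisfy the consistency conditions L2ᵀ = −(B1 + D1L1)(A1 + B1ᵀL1)⁻¹, ℓ2ᵀ = −(a1ᵀ + b1ᵀL1)(A1 + B1ᵀL1)⁻¹, L1ᵀ = −(B2 + D2L2)(A2 + B2ᵀL2)⁻¹, ℓ1ᵀ = −(a2ᵀ + b2ᵀL2)(A2 + B2ᵀL2)⁻¹ (with the inverses existing), and additionally A_i + L_iᵀB_i + B_iᵀL_i + L_iᵀD_iL_i ≻ 0 for i = 1, 2. If (x1ᶜ,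 x2ᶜ) satisfies x2ᶜ = L1 x1ᶜ + ℓ1 and x1ᶜ = L2 x2ᶜ + ℓ2, then for each i, x_iᶜ is the unique global minimizer of x_i ↦ f_i(x_i, L_i x_i + ℓ_i), i.e., (x1ᶜ, x2ᶜ) together with the conjectures is a consistent conjectural variations equilibrium. -/
/-!
Substituting the conjecture `y = L x + ℓ` turns a player's cost into a quadratic in `x` with
Hessian `M = A + Lᵀ B + Bᵀ L + Lᵀ D L`; as `M ≻ 0`, a stationary point is the unique global
minimizer. Solving the opponent's consistency condition for `x` shows that `x = L' y + ℓ'`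
is exactly `(A + Lᵀ B) x + (Bᵀ + Lᵀ D) y + a + Lᵀ b = 0`, i.e. `∇ₓ f + Lᵀ ∇_y f = 0`.
At `y = L x + ℓ` this is the stationarity of the reduced quadratic.
-/

open Matrix

/-- Player cost `f(x, y) = ½ xᵀ A x + yᵀ B x + ½ yᵀ D y + aᵀ x + bᵀ y`, i.e.
`(1/2)[x; y]ᵀ [[A, Bᵀ],[B, D]] [x; y] + [a; b]ᵀ [x; y]`, where `x` is the player's own
action and `y` the opponent's. -/
noncomputable def quadCost {di dmi : ℕ}
    (A : Matrix (Fin di) (Fin di) ℝ) (B : Matrix (Fin dmi) (Fin di) ℝ)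
    (D : Matrix (Fin dmi) (Fin dmi) ℝ) (a : Fin di → ℝ) (b : Fin dmi → ℝ)
    (x : Fin di → ℝ) (y : Fin dmi → ℝ) : ℝ :=
  (1 / 2) * (x ⬝ᵥ A.mulVec x) + y ⬝ᵥ B.mulVec x + (1 / 2) * (y ⬝ᵥ D.mulVec y)
    + a ⬝ᵥ x + b ⬝ᵥ y

namespace Matrix

variable {m n R : Type*} [Fintype n] [CommRing R]

theorem PosDef.quadratic_lt_of_mulVec_add_eq_zero {M : Matrix n n ℝ} (hM : M.PosDef)
    {g xc : n → ℝ} (hstat : M *ᵥ xc + g = 0) {x : n → ℝ} (hx : x ≠ xc) :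
    (1 / 2) * (xc ⬝ᵥ M *ᵥ xc) + g ⬝ᵥ xc < (1 / 2) * (x ⬝ᵥ M *ᵥ x) + g ⬝ᵥ x := by
  obtain ⟨d, hd, rfl⟩ : ∃ d ≠ 0, x = xc + d := ⟨x - xc, sub_ne_zero.2 hx, by abel⟩
  have hpos : 0 < d ⬝ᵥ M *ᵥ d := by simpa using hM.dotProduct_mulVec_pos hd
  have hsymm : xc ⬝ᵥ M *ᵥ d = d ⬝ᵥ M *ᵥ xc := by
    rw [← dotProduct_transpose_mulVec, ← conjTranspose_eq_transpose_of_trivial,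
      hM.isHermitian.eq]
  have hg : g = -(M *ᵥ xc) := eq_neg_of_add_eq_zero_right hstat
  simp only [mulVec_add, dotProduct_add, add_dotProduct, hsymm, hg, neg_dotProduct,
    dotProduct_comm (M *ᵥ xc) d]
  linarith

variable [DecidableEq n]

theorem transpose_mul_eq_neg_transpose_of_transpose_eq {K : Matrix n n R} {P : Matrix m n R}
    {X : Matrix n m R} (hK : IsUnit K.det) (hX : Xᵀ = -(P * K⁻¹)) : Kᵀ * X = -Pᵀ := by
  have : Xᵀ * K = -P := by
    rw [hX, Matrix.neg_mul, Matrix.mul_assoc, nonsing_inv_mul _ hK, Matrix.mul_one]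
  simpa [transpose_mul] using congrArg transpose this

theorem transpose_mulVec_eq_neg_of_eq {K : Matrix n n R} {v ℓ : n → R}
    (hK : IsUnit K.det) (hℓ : ℓ = -(v ᵥ* K⁻¹)) : Kᵀ *ᵥ ℓ = -v := by
  rw [mulVec_transpose, hℓ, neg_vecMul, vecMul_vecMul, nonsing_inv_mul _ hK, vecMul_one]

end Matrix

theorem mulVec_add_eq_zero_of_consistent_conjecture {m n R : Type*} [Fintype m] [Fintype n]
    [DecidableEq n] [CommRing R] {A : Matrix n n R} {B : Matrix m n R}
    {D : Matrix m m R} {a : n → R} {b : m → R} {L : Matrix m n R} {ℓ : m → R}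
    {L' : Matrix n m R} {ℓ' : n → R} (hA : A.IsSymm) (hD : D.IsSymm)
    (hK : IsUnit (A + Bᵀ * L).det) (hL' : L'ᵀ = -((B + D * L) * (A + Bᵀ * L)⁻¹))
    (hℓ' : ℓ' = -((a + b ᵥ* L) ᵥ* (A + Bᵀ * L)⁻¹))
    {x : n → R} {y : m → R} (hy : y = L *ᵥ x + ℓ) (hx : x = L' *ᵥ y + ℓ') :
    (A + Lᵀ * B + Bᵀ * L + Lᵀ * D * L) *ᵥ x + ((Bᵀ + Lᵀ * D) *ᵥ ℓ + (a + Lᵀ *ᵥ b)) = 0 := by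
  have hKt : (A + Bᵀ * L)ᵀ = A + Lᵀ * B := by
    rw [transpose_add, transpose_mul, transpose_transpose, hA.eq]
  have hPt : (B + D * L)ᵀ = Bᵀ + Lᵀ * D := by
    rw [transpose_add, transpose_mul, hD.eq]
  have hfirst_order : (A + Lᵀ * B) *ᵥ x = -((Bᵀ + Lᵀ * D) *ᵥ y) - (a + Lᵀ *ᵥ b) := by
    rw [hx, mulVec_add, ← hKt, mulVec_mulVec,
      transpose_mul_eq_neg_transpose_of_transpose_eq hK hL',
      transpose_mulVec_eq_neg_of_eq hK hℓ', hPt, neg_mulVec, mulVec_transpose]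
    abel
  have hM : A + Lᵀ * B + Bᵀ * L + Lᵀ * D * L = A + Lᵀ * B + (Bᵀ + Lᵀ * D) * L := by
    rw [Matrix.add_mul]; abel
  rw [hM, add_mulVec, hfirst_order, ← mulVec_mulVec, hy, mulVec_add]
  abel

section

variable {di dmi : ℕ} {A : Matrix (Fin di) (Fin di) ℝ} {B : Matrix (Fin dmi) (Fin di) ℝ}
  {D : Matrix (Fin dmi) (Fin dmi) ℝ} {a : Fin di → ℝ} {b : Fin dmi → ℝ}
  {L : Matrix (Fin dmi) (Fin di) ℝ} {ℓ : Fin dmi → ℝ}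

theorem quadCost_comp_affine (hD : D.IsSymm) (x : Fin di → ℝ) :
    quadCost A B D a b x (L *ᵥ x + ℓ) =
      (1 / 2) * (x ⬝ᵥ (A + Lᵀ * B + Bᵀ * L + Lᵀ * D * L) *ᵥ x)
        + ((Bᵀ + Lᵀ * D) *ᵥ ℓ + (a + Lᵀ *ᵥ b)) ⬝ᵥ x + quadCost A B D a b 0 ℓ := by
  have hT (M : Matrix (Fin dmi) (Fin di) ℝ) (v : Fin dmi → ℝ) :
      (Mᵀ *ᵥ v) ⬝ᵥ x = v ⬝ᵥ M *ᵥ x := by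
    rw [dotProduct_comm, dotProduct_transpose_mulVec]
  have hDsymm : ℓ ⬝ᵥ D *ᵥ (L *ᵥ x) = (L *ᵥ x) ⬝ᵥ D *ᵥ ℓ := by
    rw [← dotProduct_transpose_mulVec, hD.eq]
  simp only [quadCost, add_mulVec, ← mulVec_mulVec, mulVec_add, dotProduct_add, add_dotProduct,
    dotProduct_transpose_mulVec, hT, mulVec_zero, dotProduct_zero, mul_zero, zero_add, hDsymm,
    dotProduct_comm (D *ᵥ ℓ)]
  rw [dotProduct_comm (B *ᵥ x), dotProduct_comm (D *ᵥ L *ᵥ x)]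
  ring

theorem quadCost_comp_affine_lt (hD : D.IsSymm)
    (hpos : (A + Lᵀ * B + Bᵀ * L + Lᵀ * D * L).PosDef) {xc : Fin di → ℝ}
    (hstat : (A + Lᵀ * B + Bᵀ * L + Lᵀ * D * L) *ᵥ xc
      + ((Bᵀ + Lᵀ * D) *ᵥ ℓ + (a + Lᵀ *ᵥ b)) = 0)
    {x : Fin di → ℝ} (hx : x ≠ xc) :
    quadCost A B D a b xc (L *ᵥ xc + ℓ) < quadCost A B D a b x (L *ᵥ x + ℓ) := by
  rw [quadCost_comp_affine hD, quadCost_comp_affine hD]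
  exact add_lt_add_left (hpos.quadratic_lt_of_mulVec_add_eq_zero hstat hx) _

end

/-- under the consistency conditions on the affine conjectures
`(L1, ℓ1), (L2, ℓ2)` and the second-order conditions
`A_i + L_iᵀ B_i + B_iᵀ L_i + L_iᵀ D_i L_i ≻ 0`, any point `(x1c, x2c)` with
`x2c = L1 x1c + ℓ1` and `x1c = L2 x2c + ℓ2` is such that each `x_ic` is the unique global
minimizer of `x_i ↦ f_i(x_i, L_i x_i + ℓ_i)` — i.e. `(x1c, x2c)` together with the
conjectures is a consistent conjectural variations equilibrium. -/
theorem stmt_17 {d1 d2 : ℕ}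
    (A1 : Matrix (Fin d1) (Fin d1) ℝ) (B1 : Matrix (Fin d2) (Fin d1) ℝ)
    (D1 : Matrix (Fin d2) (Fin d2) ℝ) (a1 : Fin d1 → ℝ) (b1 : Fin d2 → ℝ)
    (A2 : Matrix (Fin d2) (Fin d2) ℝ) (B2 : Matrix (Fin d1) (Fin d2) ℝ)
    (D2 : Matrix (Fin d1) (Fin d1) ℝ) (a2 : Fin d2 → ℝ) (b2 : Fin d1 → ℝ)
    (L1 : Matrix (Fin d2) (Fin d1) ℝ) (ℓ1 : Fin d2 → ℝ)
    (L2 : Matrix (Fin d1) (Fin d2) ℝ) (ℓ2 : Fin d1 → ℝ)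
    (hA1 : A1.IsSymm) (hD1 : D1.IsSymm) (hA2 : A2.IsSymm) (hD2 : D2.IsSymm)
    (hinv1 : IsUnit (A1 + B1ᵀ * L1).det) (hinv2 : IsUnit (A2 + B2ᵀ * L2).det)
    (hL2 : L2ᵀ = -((B1 + D1 * L1) * (A1 + B1ᵀ * L1)⁻¹))
    (hℓ2 : ℓ2 = -Matrix.vecMul (a1 + Matrix.vecMul b1 L1) (A1 + B1ᵀ * L1)⁻¹)
    (hL1 : L1ᵀ = -((B2 + D2 * L2) * (A2 + B2ᵀ * L2)⁻¹))
    (hℓ1 : ℓ1 = -Matrix.vecMul (a2 + Matrix.vecMul b2 L2) (A2 + B2ᵀ * L2)⁻¹)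
    (hpos1 : (A1 + L1ᵀ * B1 + B1ᵀ * L1 + L1ᵀ * D1 * L1).PosDef)
    (hpos2 : (A2 + L2ᵀ * B2 + B2ᵀ * L2 + L2ᵀ * D2 * L2).PosDef)
    (x1c : Fin d1 → ℝ) (x2c : Fin d2 → ℝ)
    (hc1 : x2c = L1.mulVec x1c + ℓ1) (hc2 : x1c = L2.mulVec x2c + ℓ2) :
    (∀ x1 : Fin d1 → ℝ, x1 ≠ x1c →
      quadCost A1 B1 D1 a1 b1 x1c (L1.mulVec x1c + ℓ1) <
        quadCost A1 B1 D1 a1 b1 x1 (L1.mulVec x1 + ℓ1)) ∧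
    (∀ x2 : Fin d2 → ℝ, x2 ≠ x2c →
      quadCost A2 B2 D2 a2 b2 x2c (L2.mulVec x2c + ℓ2) <
        quadCost A2 B2 D2 a2 b2 x2 (L2.mulVec x2 + ℓ2)) := by
  exact ⟨fun _ hx1 ↦ quadCost_comp_affine_lt hD1 hpos1
      (mulVec_add_eq_zero_of_consistent_conjecture hA1 hD1 hinv1 hL2 hℓ2 hc1 hc2) hx1,
    fun _ hx2 ↦ quadCost_comp_affine_lt hD2 hpos2
      (mulVec_add_eq_zero_of_consistent_conjecture hA2 hD2 hinv2 hL1 hℓ1 hc2 hc1) hx2⟩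
end

section
/- Suppose L satisfies the fixed point equation L(𝐀 + 𝐁L) = 𝐂 + 𝐃L with 𝐇 := 𝐀 + 𝐁L invertible. Then for any perturbation Δ with I + Δ𝐇⁻¹𝐁 invertible and 𝐀 + 𝐁(L + Δ) invertible, the exact update satisfies T(L + Δ) − L = (𝐃 − L𝐁)Δ(𝐀 + 𝐁L + 𝐁Δ)⁻¹, where T(L') = (𝐂 + 𝐃L')(𝐀 + 𝐁L')⁻¹. -/
open Matrix

/-- if `L (𝐀 + 𝐁 L) = 𝐂 + 𝐃 L` with `𝐇 = 𝐀 + 𝐁 L` invertible, then for any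
perturbation `Δ` with `I + Δ 𝐇⁻¹ 𝐁` and `𝐀 + 𝐁(L + Δ)` invertible, the exact update of
`T(L') = (𝐂 + 𝐃 L')(𝐀 + 𝐁 L')⁻¹` satisfies
`T(L + Δ) - L = (𝐃 - L 𝐁) Δ (𝐀 + 𝐁 L + 𝐁 Δ)⁻¹`. -/
theorem stmt_19 {d1 d2 : ℕ}
    (A : Matrix (Fin d1) (Fin d1) ℂ) (B : Matrix (Fin d1) (Fin d2) ℂ)
    (C : Matrix (Fin d2) (Fin d1) ℂ) (D : Matrix (Fin d2) (Fin d2) ℂ)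
    (L Δ : Matrix (Fin d2) (Fin d1) ℂ)
    (hfix : L * (A + B * L) = C + D * L)
    (hH : IsUnit (A + B * L).det)
    (hpert1 : IsUnit (1 + Δ * (A + B * L)⁻¹ * B).det)
    (hpert2 : IsUnit (A + B * (L + Δ)).det) :
    (C + D * (L + Δ)) * (A + B * (L + Δ))⁻¹ - L =
      (D - L * B) * Δ * (A + B * L + B * Δ)⁻¹ := by
  set M := A + B * (L + Δ) with hMdef
  have hM : M * M⁻¹ = 1 := mul_nonsing_inv _ hpert2
  have hrw : A + B * L + B * Δ = M := by rw [hMdef, Matrix.mul_add]; abel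
  have key : C + D * (L + Δ) = (D - L * B) * Δ + L * M := by
    have h2 : L * M = (C + D * L) + L * (B * Δ) := by
      rw [← hfix, hMdef]; simp only [Matrix.mul_add]; abel
    rw [h2]; simp only [Matrix.mul_add, Matrix.sub_mul, Matrix.mul_assoc]; abel
  rw [hrw, key, Matrix.add_mul, Matrix.mul_assoc L M M⁻¹, hM, Matrix.mul_one, add_sub_cancel_right]
end
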